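/- Let 𝒢 be a transitive subgroup of S₅ and let 𝓗 ≤ 𝒢 be the stabilizer of the element 1 ∈ {1,2,3,4,5}. Then there is an isomorphism of 𝔽₂-vector spaces H¹(𝒢, G) ⊕ Hom(𝒢, 𝔽₂) ≅ Hom(𝓗, 𝔽₂), where Hom denotes the group of group homomorphisms to the additive group 𝔽₂ = ℤ/2. -/

import Mathlib

def Gsub : Submodule (ZMod 2) (Fin 5 → ZMod 2) where
  carrier := {v | ∑ i, v i = 0}
  add_mem' := by
    intro a b ha hb
    simp only [Set.mem_setOf_eq] at *
    simp [Finset.sum_add_distrib, ha, hb]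
  zero_mem' := by simp
  smul_mem' := by
    intro c a ha
    simp only [Set.mem_setOf_eq] at *
    simp [← Finset.mul_sum, ha]

/-- The group of `1`-cocycles of `𝒢` with values in `G`. -/
def cocycles (𝒢 : Subgroup (Equiv.Perm (Fin 5))) : AddSubgroup (𝒢 → Fin 5 → ZMod 2) where
  carrier := {f | (∀ g, f g ∈ Gsub) ∧
    ∀ g h : 𝒢, f (g * h) = f g + fun j => f h ((g : Equiv.Perm (Fin 5))⁻¹ j)}
  zero_mem' := by
    refine ⟨fun g => Gsub.zero_mem, fun g h => ?_⟩
    funext j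
    simp
  add_mem' := by
    rintro a b ⟨ha1, ha2⟩ ⟨hb1, hb2⟩
    refine ⟨fun g => Gsub.add_mem (ha1 g) (hb1 g), fun g h => ?_⟩
    funext j
    simp only [Pi.add_apply, ha2 g h, hb2 g h]
    ring
  neg_mem' := by
    rintro a ⟨ha1, ha2⟩
    refine ⟨fun g => Gsub.neg_mem (ha1 g), fun g h => ?_⟩
    funext j
    simp only [Pi.neg_apply, Pi.add_apply, ha2 g h]
    ring

/-- The group of `1`-coboundaries of `𝒢` with values in `G`. -/
def coboundaries (𝒢 : Subgroup (Equiv.Perm (Fin 5))) : AddSubgroup (𝒢 → Fin 5 → ZMod 2) where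
  carrier := {f | ∃ x ∈ Gsub, ∀ g : 𝒢,
    f g = (fun j => x ((g : Equiv.Perm (Fin 5))⁻¹ j)) - x}
  zero_mem' := ⟨0, Gsub.zero_mem, fun g => by funext j; simp⟩
  add_mem' := by
    rintro a b ⟨x, hx, ha⟩ ⟨y, hy, hb⟩
    refine ⟨x + y, Gsub.add_mem hx hy, fun g => ?_⟩
    funext j
    simp only [Pi.add_apply, ha g, hb g, Pi.sub_apply]
    ring
  neg_mem' := by
    rintro a ⟨x, hx, ha⟩
    refine ⟨-x, Gsub.neg_mem hx, fun g => ?_⟩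
    funext j
    simp only [Pi.neg_apply, Pi.sub_apply, ha g]
    ring


/-!
`(𝔽₂)⁵` is the permutation module of `𝒢` on `𝒢 ⧸ 𝓗`, i.e. the module induced from the trivial
`𝓗`-module `𝔽₂`. By Shapiro's lemma, restricting a cocycle to `𝓗` and evaluating at `0`
identifies `H¹(𝒢, 𝔽₂⁵)` with `Hom(𝓗, 𝔽₂)`; a section `σ` of the orbit map gives the inverse
`ψ ↦ (g ↦ (j ↦ ψ ((σ j)⁻¹ g σ (g⁻¹ j))))`. Since `5` is odd, `v ↦ v + ∑ v` projects `𝔽₂⁵` onto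
`G` with kernel the constants, so `H¹(𝒢, 𝔽₂⁵) ≅ H¹(𝒢, G) × Hom(𝒢, 𝔽₂)`.
-/

open Finset MulAction

section PermutationModule

variable {G X A : Type*} [Group G] [MulAction G X] [AddCommGroup A]

/-- `1`-cocycles for the action `(g • v) j = v (g⁻¹ • j)` of `G` on `X → A`. -/
def IsPermCocycle (F : G → X → A) : Prop :=
  ∀ g h j, F (g * h) j = F g j + F h (g⁻¹ • j)

theorem sum_sub_smul_eq_zero [Fintype X] (x : X → A) (g : G) :
    ∑ j, (x (g⁻¹ • j) - x j) = 0 := by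
  rw [sum_sub_distrib, sub_eq_zero]
  exact Equiv.sum_comp (MulAction.toPerm g⁻¹) x

namespace IsPermCocycle

variable {F : G → X → A} (hF : IsPermCocycle F)
include hF

theorem apply_one (j : X) : F 1 j = 0 := by
  simpa using hF 1 1 j

theorem add_char (χ : G →* Multiplicative A) :
    IsPermCocycle fun g j => F g j + (χ g).toAdd := by
  intro g h j
  dsimp only
  rw [hF, map_mul, toAdd_mul]
  abel

theorem sum_mul [Fintype X] (g h : G) :
    ∑ j, F (g * h) j = ∑ j, F g j + ∑ j, F h j := by
  simp only [hF g h, sum_add_distrib, add_right_inj]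
  exact Equiv.sum_comp (MulAction.toPerm g⁻¹) (F h)

def sumChar [Fintype X] : G →* Multiplicative A :=
  MonoidHom.mk' (fun g => .ofAdd (∑ j, F g j)) fun g h => by rw [hF.sum_mul]; rfl

def restrict (x₀ : X) : stabilizer G x₀ →* Multiplicative A where
  toFun h := .ofAdd (F h x₀)
  map_one' := by simp [hF.apply_one]
  map_mul' h k := by
    rw [Subgroup.coe_mul, hF, inv_smul_eq_iff.mpr (mem_stabilizer_iff.mp h.2).symm]
    rfl

end IsPermCocycle

theorem exists_section_of_forall_exists_smul_eq {x₀ : X} (h : ∀ j, ∃ g : G, g • x₀ = j) :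
    ∃ σ : X → G, (∀ j, σ j • x₀ = j) ∧ σ x₀ = 1 := by
  classical
  choose τ hτ using h
  refine ⟨Function.update τ x₀ 1, fun j => ?_, Function.update_self ..⟩
  rcases eq_or_ne j x₀ with rfl | hj
  · simp
  · simp [hj, hτ]

section Shapiro

variable {x₀ : X} {σ : X → G} (hσ : ∀ j, σ j • x₀ = j)
include hσ

def stabilizerWord (g : G) (j : X) : stabilizer G x₀ :=
  ⟨(σ j)⁻¹ * g * σ (g⁻¹ • j), by simp [mul_smul, hσ, inv_smul_eq_iff]⟩

theorem stabilizerWord_mul (g h : G) (j : X) :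
    stabilizerWord hσ (g * h) j = stabilizerWord hσ g j * stabilizerWord hσ h (g⁻¹ • j) := by
  apply Subtype.ext
  simp only [stabilizerWord, Subgroup.coe_mul, mul_inv_rev, mul_smul]
  group

theorem stabilizerWord_of_mem (hσ₀ : σ x₀ = 1) (h : stabilizer G x₀) :
    stabilizerWord hσ h x₀ = h := by
  apply Subtype.ext
  simp [stabilizerWord, inv_smul_eq_iff.mpr (mem_stabilizer_iff.mp h.2).symm, hσ₀]

theorem isPermCocycle_stabilizerWord (ψ : stabilizer G x₀ →* Multiplicative A) :
    IsPermCocycle fun g j => (ψ (stabilizerWord hσ g j)).toAdd := by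
  intro g h j
  dsimp only
  rw [stabilizerWord_mul, map_mul, toAdd_mul]

theorem IsPermCocycle.exists_eq_coboundary {F : G → X → A} (hF : IsPermCocycle F)
    (hF₀ : ∀ h : stabilizer G x₀, F h x₀ = 0) :
    ∃ x : X → A, ∀ g j, F g j = x (g⁻¹ • j) - x j := by
  have hσ_inv (j : X) : (σ j)⁻¹ • j = x₀ := inv_smul_eq_iff.mpr (hσ j).symm
  have hF_inv (j : X) : F (σ j)⁻¹ x₀ = -F (σ j) j := by
    have := hF (σ j) (σ j)⁻¹ j
    rw [mul_inv_cancel, hF.apply_one, hσ_inv] at this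
    exact eq_neg_of_add_eq_zero_right this.symm
  refine ⟨fun j => -F (σ j) j, fun g j => ?_⟩
  beta_reduce
  set w := stabilizerWord hσ g j
  have hg : g = σ j * (w * (σ (g⁻¹ • j))⁻¹) := by
    simp only [w, stabilizerWord]
    group
  have hw : (w : G)⁻¹ • x₀ = x₀ := inv_smul_eq_iff.mpr (mem_stabilizer_iff.mp w.2).symm
  rw [hg, hF, hσ_inv, hF, hF₀, hw, hF_inv, ← hg]
  abel

end Shapiro

end PermutationModule

theorem sum_fin_five_add_const (v : Fin 5 → ZMod 2) (c : ZMod 2) :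
    ∑ i, (v i + c) = ∑ i, v i + c := by
  simp [sum_add_distrib, show (5 : ZMod 2) = 1 from rfl]

theorem add_sum_mem_Gsub (v : Fin 5 → ZMod 2) : (fun i => v i + ∑ j, v j) ∈ Gsub := by
  show ∑ i, (v i + ∑ j, v j) = 0
  rw [sum_fin_five_add_const, CharTwo.add_self_eq_zero]

section SubgroupOfS5

variable (𝒢 : Subgroup (Equiv.Perm (Fin 5)))

theorem isPermCocycle_of_mem_cocycles {f : 𝒢 → Fin 5 → ZMod 2} (hf : f ∈ cocycles 𝒢) :
    IsPermCocycle f :=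
  fun g h => congrFun (hf.2 g h)

theorem IsPermCocycle.add_sum_mem_cocycles {F : 𝒢 → Fin 5 → ZMod 2} (hF : IsPermCocycle F) :
    (fun g j => F g j + ∑ i, F g i) ∈ cocycles 𝒢 :=
  ⟨fun g => add_sum_mem_Gsub (F g), fun g h => funext (hF.add_char hF.sumChar g h)⟩

theorem mem_coboundaries_of_eq_sub {f : 𝒢 → Fin 5 → ZMod 2} (x : Fin 5 → ZMod 2)
    (hf : ∀ g j, f g j = x (g⁻¹ • j) - x j) : f ∈ coboundaries 𝒢 :=
  ⟨fun i => x i + ∑ j, x j, add_sum_mem_Gsub x, fun g => funext fun j => by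
    rw [hf, Pi.sub_apply, add_sub_add_right_eq_sub]; rfl⟩

def cocyclesRestrict :
    cocycles 𝒢 →+ Additive (stabilizer 𝒢 (0 : Fin 5) →* Multiplicative (ZMod 2)) where
  toFun f := .ofMul ((isPermCocycle_of_mem_cocycles 𝒢 f.2).restrict 0)
  map_zero' := rfl
  map_add' _ _ := rfl

theorem coboundaries_le_ker_cocyclesRestrict :
    (coboundaries 𝒢).addSubgroupOf (cocycles 𝒢) ≤ (cocyclesRestrict 𝒢).ker := by
  rintro f ⟨x, -, hx⟩
  ext h
  have hh : ((h : 𝒢) : Equiv.Perm (Fin 5))⁻¹ 0 = 0 :=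
    inv_smul_eq_iff.mpr (mem_stabilizer_iff.mp h.2).symm
  change Multiplicative.ofAdd (f.1 h 0) = 1
  rw [show f.1 h = _ from hx h, Pi.sub_apply, hh, sub_self]
  rfl

def charRestrict : Additive (𝒢 →* Multiplicative (ZMod 2)) →+
    Additive (stabilizer 𝒢 (0 : Fin 5) →* Multiplicative (ZMod 2)) where
  toFun χ := .ofMul ((Additive.toMul χ).comp (stabilizer 𝒢 (0 : Fin 5)).subtype)
  map_zero' := rfl
  map_add' _ _ := rfl

def shapiroMap : ((cocycles 𝒢 ⧸ (coboundaries 𝒢).addSubgroupOf (cocycles 𝒢)) ×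
      Additive (𝒢 →* Multiplicative (ZMod 2))) →+
    Additive (stabilizer 𝒢 (0 : Fin 5) →* Multiplicative (ZMod 2)) :=
  (QuotientAddGroup.lift _ _ (coboundaries_le_ker_cocyclesRestrict 𝒢)).coprod (charRestrict 𝒢)

theorem shapiroMap_mk_apply (f : cocycles 𝒢) (χ : Additive (𝒢 →* Multiplicative (ZMod 2)))
    (h : stabilizer 𝒢 (0 : Fin 5)) :
    (Additive.toMul (shapiroMap 𝒢 (QuotientAddGroup.mk f, χ)) h).toAdd =
      f.1 h 0 + (Additive.toMul χ h).toAdd :=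
  rfl

variable {𝒢} {σ : Fin 5 → 𝒢} (hσ : ∀ j, σ j • (0 : Fin 5) = j)
include hσ

theorem shapiroMap_injective : Function.Injective (shapiroMap 𝒢) := by
  rw [injective_iff_map_eq_zero]
  rintro ⟨q, χ⟩ hzero
  obtain ⟨f, rfl⟩ := QuotientAddGroup.mk_surjective q
  have hF := (isPermCocycle_of_mem_cocycles 𝒢 f.2).add_char (Additive.toMul χ)
  obtain ⟨x, hx⟩ := hF.exists_eq_coboundary hσ fun h => by
    rw [← shapiroMap_mk_apply, hzero]; rfl
  have hχ : Additive.toMul χ = 1 := by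
    ext g
    calc Additive.toMul χ g = .ofAdd (∑ j, (f.1 g j + (Additive.toMul χ g).toAdd)) := by
          rw [sum_fin_five_add_const, show ∑ j, f.1 g j = 0 from f.2.1 g, zero_add]
          rfl
      _ = .ofAdd (∑ j, (x (g⁻¹ • j) - x j)) := by simp_rw [← hx]
      _ = 1 := by rw [sum_sub_smul_eq_zero]; rfl
  have hf : f.1 ∈ coboundaries 𝒢 :=
    mem_coboundaries_of_eq_sub 𝒢 x fun g j => by simpa [hχ] using hx g j
  exact Prod.ext (QuotientAddGroup.eq_zero_iff _ |>.mpr hf) (congrArg Additive.ofMul hχ)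

theorem shapiroMap_surjective (hσ₀ : σ 0 = 1) : Function.Surjective (shapiroMap 𝒢) := by
  intro ψ
  set F : 𝒢 → Fin 5 → ZMod 2 := fun g j => (Additive.toMul ψ (stabilizerWord hσ g j)).toAdd
  have hF : IsPermCocycle F := isPermCocycle_stabilizerWord hσ _
  refine ⟨(QuotientAddGroup.mk ⟨_, hF.add_sum_mem_cocycles⟩, .ofMul hF.sumChar), ?_⟩
  ext h
  change F h 0 + ∑ i, F h i + ∑ i, F h i = (Additive.toMul ψ h).toAdd
  rw [add_assoc, CharTwo.add_self_eq_zero, add_zero]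
  exact congrArg (fun k => (Additive.toMul ψ k).toAdd) (stabilizerWord_of_mem hσ hσ₀ h)

end SubgroupOfS5

/-- Let `𝒢` be a transitive subgroup of `S₅` and `𝓗 ≤ 𝒢` the stabilizer of a point.
Then `H¹(𝒢, G) ⊕ Hom(𝒢, 𝔽₂) ≅ Hom(𝓗, 𝔽₂)` (an isomorphism of elementary abelian
`2`-groups, i.e. of `𝔽₂`-vector spaces). Here `H¹(𝒢, G)` is the quotient of `1`-cocycles
by `1`-coboundaries, and `Hom(A, 𝔽₂)` is the group of homomorphisms `A → ℤ/2`. -/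
theorem stmt5 (𝒢 : Subgroup (Equiv.Perm (Fin 5)))
    (htrans : ∀ i j : Fin 5, ∃ π ∈ 𝒢, π i = j) :
    Nonempty (
      ((cocycles 𝒢 ⧸ (coboundaries 𝒢).addSubgroupOf (cocycles 𝒢)) ×
        Additive (𝒢 →* Multiplicative (ZMod 2))) ≃+
      Additive ((MulAction.stabilizer 𝒢 (0 : Fin 5)) →* Multiplicative (ZMod 2))) := by
  obtain ⟨σ, hσ, hσ₀⟩ := exists_section_of_forall_exists_smul_eq (x₀ := (0 : Fin 5))
    fun j => let ⟨π, hπ, hj⟩ := htrans 0 j; ⟨(⟨π, hπ⟩ : 𝒢), hj⟩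
  exact ⟨.ofBijective (shapiroMap 𝒢) ⟨shapiroMap_injective hσ, shapiroMap_surjective hσ hσ₀⟩⟩
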